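/- arXiv:2507.09438 — 2 statements merged into one kernel-verified Lean document; each statement's English description precedes it below -/
import Mathlib

section
/- (Homological perturbation lemma) Given a strong deformation retract (W, d_W) ⇄ (V, d_V) with maps i, p, homotopy h satisfying p i = id_W, id_V − i p = d_V h + h d_V, h² = 0, p h = 0, h i = 0, and a perturbation μ of d_V (i.e. (d_V + μ)² = 0) such that (1 + hμ) is invertible, the formulas h_μ = (1 + hμ)⁻¹ h, i_μ = (1 + hμ)⁻¹ i, p_μ = p (1 + μh)⁻¹, and d_W^μ = d_W + p μ (1 + hμ)⁻¹ i define a new strong deformation retract between (W, d_W^μ) and (V, d_V + μ). -/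
/-!
Write `D = d_V + μ`, `π = i p`, `a = (1 + hμ)⁻¹` and `b = (1 + μh)⁻¹`. Everything that happens on `V`
is an identity in the ring `End V`, driven by the push-through relations `a h = h b`, `b μ = μ a` and
by `d_V μ + μ d_V + μ² = D² - d_V² = 0`. Since `π = 1 + hμ + μh - (D h + h D)`, one finds
`1 - a π b - (D a h + a h D) = -a h (D² - d_V²) h b = 0`, the new homotopy relation.
Similarly `(1 + hμ) D a = d_V + π μ a`, which makes `i_μ = a i` a chain map; then `p_μ i_μ = 1`
exhibits `d_W^μ` as a retract of `D`, so it squares to zero.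
-/

section EndomorphismRing

variable {R : Type*} [Ring R] {d μ h π a b x y : R}

theorem mul_eq_mul_of_inverses_one_add_mul (ha : a * (1 + x * y) = 1) (hb : (1 + y * x) * b = 1) :
    a * x = x * b := by
  linear_combination (norm := noncomm_ring) ha * (x * b) - (a * x) * hb

theorem mul_inverse_one_add_mul_eq_self (hx : x * x = 0) (ha : (1 + x * y) * a = 1) :
    x * a = x := by
  linear_combination (norm := noncomm_ring) x * ha - hx * (y * a)

theorem inverse_one_add_mul_mul_eq_self (hx : x * x = 0) (hb : b * (1 + y * x) = 1) :
    b * x = x := by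
  linear_combination (norm := noncomm_ring) hb * x - (b * y) * hx

theorem perturbed_mul_inverse (hd : d * d = 0) (hD : (d + μ) * (d + μ) = 0)
    (hπ : 1 - π = d * h + h * d) (ha : a * (1 + h * μ) = 1) (ha' : (1 + h * μ) * a = 1) :
    (d + μ) * a = a * (d + π * μ * a) := by
  linear_combination (norm := noncomm_ring)
    a * (d * ha' + h * (hD - hd) * a + hπ * (μ * a)) - ha * ((d + μ) * a)

theorem inverse_mul_perturbed (hd : d * d = 0) (hD : (d + μ) * (d + μ) = 0)
    (hπ : 1 - π = d * h + h * d) (hb : (1 + μ * h) * b = 1) (hb' : b * (1 + μ * h) = 1) :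
    b * (d + μ) = (d + b * μ * π) * b := by
  linear_combination (norm := noncomm_ring)
    (hb' * d + b * (hD - hd) * h + (b * μ) * hπ) * b - (b * (d + μ)) * hb

theorem perturbed_homotopy (hd : d * d = 0) (hD : (d + μ) * (d + μ) = 0)
    (hπ : 1 - π = d * h + h * d) (ha : a * (1 + h * μ) = 1) (hb : (1 + μ * h) * b = 1) :
    1 - a * π * b = (d + μ) * (a * h) + (a * h) * (d + μ) := by
  have hab := mul_eq_mul_of_inverses_one_add_mul ha hb
  linear_combination (norm := noncomm_ring) a * hπ * b - (a * h) * (hD - hd) * (h * b)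
    + ha * ((d + μ) * h * b - μ * h * b - b) + (a * h * (d + μ) - 1) * hb - (d + μ) * hab

end EndomorphismRing

section LinearMaps

variable {R V W : Type*} [Semiring R] [AddCommGroup V] [Module R V] [AddCommGroup W] [Module R W]
  {i : W →ₗ[R] V} {p : V →ₗ[R] W} {dV h μ A B : Module.End R V} {dW : Module.End R W}

theorem LinearMap.comp_self_eq_zero_of_retract {D : Module.End R V} {d : Module.End R W}
    (hpi : p ∘ₗ i = LinearMap.id) (hi : D ∘ₗ i = i ∘ₗ d) (hD : D * D = 0) : d ∘ₗ d = 0 := by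
  calc d ∘ₗ d = p ∘ₗ ((i ∘ₗ d) ∘ₗ d) := by
        rw [← LinearMap.comp_assoc, ← LinearMap.comp_assoc, hpi, LinearMap.id_comp]
    _ = p ∘ₗ ((D * D) ∘ₗ i) := by rw [← hi, LinearMap.comp_assoc, ← hi]; rfl
    _ = 0 := by rw [hD, LinearMap.zero_comp, LinearMap.comp_zero]

theorem perturbed_comp_perturbed_inclusion (hdV : dV * dV = 0) (hpert : (dV + μ) * (dV + μ) = 0)
    (hπ : 1 - i ∘ₗ p = dV * h + h * dV) (hi : dV ∘ₗ i = i ∘ₗ dW)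
    (hA : A * (1 + h * μ) = 1) (hA' : (1 + h * μ) * A = 1) :
    (dV + μ) ∘ₗ (A ∘ₗ i) = (A ∘ₗ i) ∘ₗ (dW + p ∘ₗ (μ ∘ₗ (A ∘ₗ i))) := by
  ext w
  have hi' : dV (i w) = i (dW w) := LinearMap.congr_fun hi w
  simpa [hi'] using LinearMap.congr_fun (perturbed_mul_inverse hdV hpert hπ hA hA') (i w)

theorem perturbed_comp_perturbed_projection (hdV : dV * dV = 0)
    (hpert : (dV + μ) * (dV + μ) = 0) (hπ : 1 - i ∘ₗ p = dV * h + h * dV)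
    (hp : dW ∘ₗ p = p ∘ₗ dV) (hA : (1 + h * μ) * A = 1)
    (hB : (1 + μ * h) * B = 1) (hB' : B * (1 + μ * h) = 1) :
    (dW + p ∘ₗ (μ ∘ₗ (A ∘ₗ i))) ∘ₗ (p ∘ₗ B) = (p ∘ₗ B) ∘ₗ (dV + μ) := by
  have key := inverse_mul_perturbed hdV hpert hπ hB hB'
  rw [mul_eq_mul_of_inverses_one_add_mul hB' hA] at key
  ext v
  have hp' : dW (p (B v)) = p (dV (B v)) := LinearMap.congr_fun hp (B v)
  simpa [hp'] using (congrArg p (LinearMap.congr_fun key v)).symm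

theorem perturbed_projection_comp_inclusion (hpi : p ∘ₗ i = LinearMap.id) (hph : p ∘ₗ h = 0)
    (hhi : h ∘ₗ i = 0) (hh : h * h = 0) (hA : (1 + h * μ) * A = 1) (hB : B * (1 + μ * h) = 1) :
    (p ∘ₗ B) ∘ₗ (A ∘ₗ i) = LinearMap.id := by
  have hBA : B * A = B - h * μ * A := by
    linear_combination (norm := noncomm_ring)
      B * hA - inverse_one_add_mul_mul_eq_self hh hB * μ * A
  have hB_eq : B = 1 - B * μ * h := by linear_combination (norm := noncomm_ring) hB
  have hpi' (w : W) : p (i w) = w := LinearMap.congr_fun hpi w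
  have hph' (v : V) : p (h v) = 0 := LinearMap.congr_fun hph v
  have hhi' (w : W) : h (i w) = 0 := LinearMap.congr_fun hhi w
  ext w
  have hBi : B (i w) = i w := by
    rw [hB_eq]
    simp [hhi']
  simp only [LinearMap.comp_apply, ← Module.End.mul_apply, hBA]
  simp [hBi, hph', hpi']

end LinearMaps

theorem homological_perturbation_lemma_general {K V W : Type*} [Field K]
    [AddCommGroup V] [Module K V] [AddCommGroup W] [Module K W]
    (dV : Module.End K V) (dW : Module.End K W)
    (i : W →ₗ[K] V) (p : V →ₗ[K] W) (h : Module.End K V) (μ : Module.End K V)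
    (hdV : dV * dV = 0)
    -- i, p are chain maps
    (hi : dV ∘ₗ i = i ∘ₗ dW) (hp : dW ∘ₗ p = p ∘ₗ dV)
    -- strong deformation retract conditions
    (hpi : p ∘ₗ i = LinearMap.id)
    (hretr : (LinearMap.id : V →ₗ[K] V) - i ∘ₗ p = dV ∘ₗ h + h ∘ₗ dV)
    (hh2 : h * h = 0) (hph : p ∘ₗ h = 0) (hhi : h ∘ₗ i = 0)
    -- μ is a perturbation
    (hpert : (dV + μ) * (dV + μ) = 0)
    -- invertibility of 1 + hμ and of 1 + μh
    (A : Module.End K V) (hA1 : (1 + h * μ) * A = 1) (hA2 : A * (1 + h * μ) = 1)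
    (B : Module.End K V) (hB1 : (1 + μ * h) * B = 1) (hB2 : B * (1 + μ * h) = 1) :
    -- the perturbed differential on W squares to zero
    ((dW + p ∘ₗ (μ ∘ₗ (A ∘ₗ i))) ∘ₗ (dW + p ∘ₗ (μ ∘ₗ (A ∘ₗ i))) = 0) ∧
    -- i_μ and p_μ are chain maps for the perturbed differentials
    ((dV + μ) ∘ₗ (A ∘ₗ i) = (A ∘ₗ i) ∘ₗ (dW + p ∘ₗ (μ ∘ₗ (A ∘ₗ i)))) ∧
    ((dW + p ∘ₗ (μ ∘ₗ (A ∘ₗ i))) ∘ₗ (p ∘ₗ B) = (p ∘ₗ B) ∘ₗ (dV + μ)) ∧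
    -- retract equations
    ((p ∘ₗ B) ∘ₗ (A ∘ₗ i) = LinearMap.id) ∧
    ((LinearMap.id : V →ₗ[K] V) - (A ∘ₗ i) ∘ₗ (p ∘ₗ B)
        = (dV + μ) ∘ₗ (A ∘ₗ h) + (A ∘ₗ h) ∘ₗ (dV + μ)) ∧
    -- side conditions
    ((A ∘ₗ h) ∘ₗ (A ∘ₗ h) = 0) ∧
    ((p ∘ₗ B) ∘ₗ (A ∘ₗ h) = 0) ∧
    ((A ∘ₗ h) ∘ₗ (A ∘ₗ i) = 0) := by
  have hπ : 1 - i ∘ₗ p = dV * h + h * dV := hretr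
  have hhA : h * A = h := mul_inverse_one_add_mul_eq_self hh2 hA1
  have hBAh : B * (A * h) = h * B := by
    rw [mul_eq_mul_of_inverses_one_add_mul hA2 hB1, ← mul_assoc,
      inverse_one_add_mul_mul_eq_self hh2 hB2]
  have hincl := perturbed_comp_perturbed_inclusion (p := p) hdV hpert hπ hi hA2 hA1
  have hpBAi := perturbed_projection_comp_inclusion hpi hph hhi hh2 hA1 hB2
  refine ⟨LinearMap.comp_self_eq_zero_of_retract hpBAi hincl hpert, hincl,
    perturbed_comp_perturbed_projection hdV hpert hπ hp hA1 hB1 hB2, hpBAi,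
    perturbed_homotopy hdV hpert hπ hA2 hB1, ?_, ?_, ?_⟩
  · show A * h * (A * h) = 0
    linear_combination (norm := noncomm_ring) A * hhA * h + A * hh2
  · show p ∘ₗ (B * (A * h)) = 0
    rw [hBAh, Module.End.mul_eq_comp, ← LinearMap.comp_assoc, hph, LinearMap.zero_comp]
  · show A ∘ₗ ((h * A) ∘ₗ i) = 0
    rw [hhA, hhi, LinearMap.comp_zero]

/-- Homological perturbation lemma. Given a strong deformation retract
`(W, d_W) ⇄ (V, d_V)` with data `(i, p, h)` and a perturbation `μ` of `d_V`, such that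
`1 + hμ` (and hence `1 + μh`) is invertible (with inverses `A` and `B`), the perturbed
data `h_μ = A h`, `i_μ = A i`, `p_μ = p B`, `d_W^μ = d_W + p μ A i` form a new strong
deformation retract between `(W, d_W^μ)` and `(V, d_V + μ)`. -/
theorem homological_perturbation_lemma {K V W : Type*} [Field K]
    [AddCommGroup V] [Module K V] [AddCommGroup W] [Module K W]
    (dV : Module.End K V) (dW : Module.End K W)
    (i : W →ₗ[K] V) (p : V →ₗ[K] W) (h : Module.End K V) (μ : Module.End K V)
    (hdV : dV * dV = 0) (hdW : dW * dW = 0)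
    -- i, p are chain maps
    (hi : dV ∘ₗ i = i ∘ₗ dW) (hp : dW ∘ₗ p = p ∘ₗ dV)
    -- strong deformation retract conditions
    (hpi : p ∘ₗ i = LinearMap.id)
    (hretr : (LinearMap.id : V →ₗ[K] V) - i ∘ₗ p = dV ∘ₗ h + h ∘ₗ dV)
    (hh2 : h * h = 0) (hph : p ∘ₗ h = 0) (hhi : h ∘ₗ i = 0)
    -- μ is a perturbation
    (hpert : (dV + μ) * (dV + μ) = 0)
    -- invertibility of 1 + hμ and of 1 + μh
    (A : Module.End K V) (hA1 : (1 + h * μ) * A = 1) (hA2 : A * (1 + h * μ) = 1)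
    (B : Module.End K V) (hB1 : (1 + μ * h) * B = 1) (hB2 : B * (1 + μ * h) = 1) :
    -- the perturbed differential on W squares to zero
    ((dW + p ∘ₗ (μ ∘ₗ (A ∘ₗ i))) ∘ₗ (dW + p ∘ₗ (μ ∘ₗ (A ∘ₗ i))) = 0) ∧
    -- i_μ and p_μ are chain maps for the perturbed differentials
    ((dV + μ) ∘ₗ (A ∘ₗ i) = (A ∘ₗ i) ∘ₗ (dW + p ∘ₗ (μ ∘ₗ (A ∘ₗ i)))) ∧
    ((dW + p ∘ₗ (μ ∘ₗ (A ∘ₗ i))) ∘ₗ (p ∘ₗ B) = (p ∘ₗ B) ∘ₗ (dV + μ)) ∧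
    -- retract equations
    ((p ∘ₗ B) ∘ₗ (A ∘ₗ i) = LinearMap.id) ∧
    ((LinearMap.id : V →ₗ[K] V) - (A ∘ₗ i) ∘ₗ (p ∘ₗ B)
        = (dV + μ) ∘ₗ (A ∘ₗ h) + (A ∘ₗ h) ∘ₗ (dV + μ)) ∧
    -- side conditions
    ((A ∘ₗ h) ∘ₗ (A ∘ₗ h) = 0) ∧
    ((p ∘ₗ B) ∘ₗ (A ∘ₗ h) = 0) ∧
    ((A ∘ₗ h) ∘ₗ (A ∘ₗ i) = 0) :=
  homological_perturbation_lemma_general dV dW i p h μ hdV hi hp hpi hretr hh2 hph hhi hpert A hA1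
    hA2 B hB1 hB2
end

section
/- Let (L, U, S, σ) be a BV L∞-data for a quasi-smooth L∞-algebra concentrated in degrees [1,2], and let Φ : (L̃, V) → (L, U) be a quasi-isomorphism of such L∞-algebras. Define the pullback φ*σ via the square with vertical maps φ^# : L̃² → L² and φ* : (L¹)^∨ → (L̃¹)^∨. Then for every Maurer-Cartan element υ of (L̃, V), the square with rows [L̃¹_υ →^{d_υ} L̃²_υ] and [(L̃²_υ)^∨ →^{d_υ^∨} (L̃¹_υ)^∨] and vertical maps (φ*σ_υ^∨, φ*σ_υ) is a quasi-isomorphism of complexes; i.e. (φ*S, φ*σ) is again BV data. -/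
/-- A commuting square of linear maps between two-term complexes
`[C0 →c C1]` and `[D0 →e D1]` which is a quasi-isomorphism: it commutes, and the
induced maps on `H⁰ = ker` and `H¹ = coker` are bijective. -/
def IsQuasiIsoSq {K C0 C1 D0 D1 : Type*} [Field K]
    [AddCommGroup C0] [Module K C0] [AddCommGroup C1] [Module K C1]
    [AddCommGroup D0] [Module K D0] [AddCommGroup D1] [Module K D1]
    (c : C0 →ₗ[K] C1) (e : D0 →ₗ[K] D1) (f0 : C0 →ₗ[K] D0) (f1 : C1 →ₗ[K] D1) : Prop :=
  (f1 ∘ₗ c = e ∘ₗ f0) ∧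
  (∀ x, c x = 0 → f0 x = 0 → x = 0) ∧
  (∀ y, e y = 0 → ∃ x, c x = 0 ∧ f0 x = y) ∧
  (∀ x, (∃ w, e w = f1 x) → ∃ v, c v = x) ∧
  (∀ y, ∃ x w, y = f1 x + e w)

section Aux
variable {K C0 C1 D0 D1 E0 E1 : Type*} [Field K]
    [AddCommGroup C0] [Module K C0] [AddCommGroup C1] [Module K C1]
    [AddCommGroup D0] [Module K D0] [AddCommGroup D1] [Module K D1]
    [AddCommGroup E0] [Module K E0] [AddCommGroup E1] [Module K E1]

/-- Any functional vanishing on the kernel of `c` factors through `c`. -/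
lemma exists_factor (c : C0 →ₗ[K] C1) (φ : C0 →ₗ[K] K)
    (h : ∀ x, c x = 0 → φ x = 0) : ∃ w : C1 →ₗ[K] K, w ∘ₗ c = φ := by
  have hle : LinearMap.ker c ≤ LinearMap.ker φ := fun x hx => h x hx
  let q := (LinearMap.ker c).liftQ φ hle
  obtain ⟨w, hw⟩ := LinearMap.exists_extend (q ∘ₗ (c.quotKerEquivRange.symm : LinearMap.range c →ₗ[K] _))
  refine ⟨w, ?_⟩
  ext x
  have h2 := LinearMap.congr_fun hw (c.quotKerEquivRange (Submodule.Quotient.mk x))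
  simp only [LinearMap.comp_apply, Submodule.subtype_apply, LinearEquiv.coe_coe,
    LinearEquiv.symm_apply_apply] at h2
  have h3 : ((c.quotKerEquivRange (Submodule.Quotient.mk x)) : C1) = c x :=
    LinearMap.quotKerEquivRange_apply_mk c x
  rw [h3] at h2
  simpa [q] using h2

/-- Quasi-isomorphism squares compose. -/
lemma IsQuasiIsoSq.comp {c : C0 →ₗ[K] C1} {e : D0 →ₗ[K] D1} {g : E0 →ₗ[K] E1}
    {f0 : C0 →ₗ[K] D0} {f1 : C1 →ₗ[K] D1} {g0 : D0 →ₗ[K] E0} {g1 : D1 →ₗ[K] E1}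
    (h : IsQuasiIsoSq c e f0 f1) (h' : IsQuasiIsoSq e g g0 g1) :
    IsQuasiIsoSq c g (g0 ∘ₗ f0) (g1 ∘ₗ f1) := by
  obtain ⟨hc, hi0, hs0, hi1, hs1⟩ := h
  obtain ⟨hc', hi0', hs0', hi1', hs1'⟩ := h'
  refine ⟨?_, ?_, ?_, ?_, ?_⟩
  · ext x
    have e1 := LinearMap.congr_fun hc x
    have e2 := LinearMap.congr_fun hc' (f0 x)
    simp only [LinearMap.comp_apply] at e1 e2 ⊢
    rw [e1, e2]
  · intro x hx hfx
    simp only [LinearMap.comp_apply] at hfx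
    have hf0 : e (f0 x) = 0 := by
      have := LinearMap.congr_fun hc x
      simp only [LinearMap.comp_apply] at this
      rw [← this, hx, map_zero]
    exact hi0 x hx (hi0' (f0 x) hf0 hfx)
  · intro z hz
    obtain ⟨y, hy, hgy⟩ := hs0' z hz
    obtain ⟨x, hx, hfx⟩ := hs0 y hy
    exact ⟨x, hx, by simp [LinearMap.comp_apply, hfx, hgy]⟩
  · intro x ⟨w, hw⟩
    simp only [LinearMap.comp_apply] at hw
    obtain ⟨v, hv⟩ := hi1' (f1 x) ⟨w, hw⟩
    exact hi1 x ⟨v, hv⟩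
  · intro z
    obtain ⟨y, w, hw⟩ := hs1' z
    obtain ⟨x, w', hw'⟩ := hs1 y
    refine ⟨x, g0 w' + w, ?_⟩
    have := LinearMap.congr_fun hc' w'
    simp only [LinearMap.comp_apply] at this ⊢
    rw [hw, hw', map_add, this, map_add, add_assoc]

/-- The dual of a quasi-isomorphism square of vector spaces is a quasi-isomorphism square. -/
lemma IsQuasiIsoSq.dual {c : C0 →ₗ[K] C1} {e : D0 →ₗ[K] D1}
    {f0 : C0 →ₗ[K] D0} {f1 : C1 →ₗ[K] D1}
    (h : IsQuasiIsoSq c e f0 f1) :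
    IsQuasiIsoSq e.dualMap c.dualMap f1.dualMap f0.dualMap := by
  obtain ⟨hc, hi0, hs0, hi1, hs1⟩ := h
  have hcomm : ∀ x, f1 (c x) = e (f0 x) := fun x => LinearMap.congr_fun hc x
  refine ⟨?_, ?_, ?_, ?_, ?_⟩
  · ext ψ x
    simp only [LinearMap.comp_apply, LinearMap.dualMap_apply]
    exact congrArg ψ (hcomm x).symm
  · -- injectivity on H⁰ of the dual square
    intro ψ he hf
    ext y
    obtain ⟨x, w, hy⟩ := hs1 y
    have h1 : ψ (f1 x) = 0 := LinearMap.congr_fun hf x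
    have h2 : ψ (e w) = 0 := LinearMap.congr_fun he w
    simp [hy, h1, h2]
  · -- surjectivity on H⁰ of the dual square
    intro φ hφ
    -- φ : Dual C1 kills `range c`; build ψ on D1 via the iso of cokernels.
    have hφ' : ∀ x, φ (c x) = 0 := fun x => LinearMap.congr_fun hφ x
    have hle : LinearMap.range c ≤ LinearMap.ker φ := by
      rintro y ⟨x, rfl⟩; exact hφ' x
    have hle2 : LinearMap.range c ≤ LinearMap.ker ((LinearMap.range e).mkQ ∘ₗ f1) := by
      rintro y ⟨x, rfl⟩
      simp only [LinearMap.mem_ker, LinearMap.comp_apply, Submodule.mkQ_apply,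
        Submodule.Quotient.mk_eq_zero]
      exact ⟨f0 x, (hcomm x).symm⟩
    let Hm := (LinearMap.range c).liftQ ((LinearMap.range e).mkQ ∘ₗ f1) hle2
    have hinj : Function.Injective Hm := by
      rw [← LinearMap.ker_eq_bot, eq_bot_iff]
      rintro q hq
      induction q using Submodule.Quotient.induction_on with
      | _ x =>
        simp only [LinearMap.mem_ker, Submodule.liftQ_apply, LinearMap.comp_apply,
          Submodule.mkQ_apply, Submodule.Quotient.mk_eq_zero, Hm] at hq
        obtain ⟨w, hw⟩ := hq
        obtain ⟨v, hv⟩ := hi1 x ⟨w, hw⟩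
        simpa [Submodule.Quotient.mk_eq_zero] using (⟨v, hv⟩ : x ∈ LinearMap.range c)
    have hsurj : Function.Surjective Hm := by
      intro q
      induction q using Submodule.Quotient.induction_on with
      | _ y =>
        obtain ⟨x, w, hy⟩ := hs1 y
        refine ⟨Submodule.Quotient.mk x, ?_⟩
        simp only [Submodule.liftQ_apply, LinearMap.comp_apply, Submodule.mkQ_apply, Hm]
        rw [hy]
        rw [Submodule.Quotient.eq]
        exact ⟨-w, by rw [map_neg]; abel⟩
    let H := LinearEquiv.ofBijective Hm ⟨hinj, hsurj⟩
    let φq := (LinearMap.range c).liftQ φ hle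
    refine ⟨φq ∘ₗ (H.symm : _ →ₗ[K] _) ∘ₗ (LinearMap.range e).mkQ, ?_, ?_⟩
    · ext w
      have : ((LinearMap.range e).mkQ) (e w) = 0 := by
        simp [Submodule.Quotient.mk_eq_zero]
      simp [LinearMap.dualMap_apply, this]
    · ext x
      have hH : H (Submodule.Quotient.mk x) = (LinearMap.range e).mkQ (f1 x) := by
        simp only [H, LinearEquiv.ofBijective_apply]; rfl
      simp only [LinearMap.comp_apply, LinearMap.dualMap_apply, Submodule.mkQ_apply,
        LinearEquiv.coe_coe]
      rw [show ((LinearMap.range e).mkQ (f1 x)) = Submodule.Quotient.mk (f1 x) from rfl] at hH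
      rw [← hH, LinearEquiv.symm_apply_apply]
      simp [φq]
  · -- injectivity on H¹ of the dual square
    intro φ ⟨w, hw⟩
    -- φ : Dual D0 with w ∘ c = φ ∘ f0; show φ = ψ ∘ e for some ψ.
    have hw' : ∀ x, w (c x) = φ (f0 x) := fun x => LinearMap.congr_fun hw x
    have hker : ∀ x, e x = 0 → φ x = 0 := by
      intro x hx
      obtain ⟨x', hx', hfx'⟩ := hs0 x hx
      rw [← hfx', ← hw' x', hx', map_zero]
    obtain ⟨ψ, hψ⟩ := exists_factor e φ hker
    exact ⟨ψ, hψ⟩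
  · -- surjectivity on H¹ of the dual square
    intro φ
    -- restrict f0 to kernels: an isomorphism ker c ≃ ker e
    have hmem : ∀ x ∈ LinearMap.ker c, f0 x ∈ LinearMap.ker e := by
      intro x hx
      simp only [LinearMap.mem_ker] at hx ⊢
      rw [← hcomm x, hx, map_zero]  -- e (f0 x) = f1 (c x)
    let F : LinearMap.ker c →ₗ[K] LinearMap.ker e := f0.restrict hmem
    have hFinj : Function.Injective F := by
      rintro ⟨x, hx⟩ ⟨y, hy⟩ hxy
      have : f0 (x - y) = 0 := by
        have := congrArg (Subtype.val) hxy
        simp only [F, LinearMap.restrict_apply] at this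
        simp [map_sub, this]
      have hc0 : c (x - y) = 0 := by
        simp only [LinearMap.mem_ker] at hx hy
        simp [map_sub, hx, hy]
      have := hi0 _ hc0 this
      exact Subtype.ext (sub_eq_zero.mp this)
    have hFsurj : Function.Surjective F := by
      rintro ⟨y, hy⟩
      obtain ⟨x, hx, hfx⟩ := hs0 y (by simpa using hy)
      exact ⟨⟨x, by simpa using hx⟩, Subtype.ext (by simpa [F, LinearMap.restrict_apply] using hfx)⟩
    let Fe := LinearEquiv.ofBijective F ⟨hFinj, hFsurj⟩
    obtain ⟨ψ, hψ⟩ := LinearMap.exists_extend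
      ((φ ∘ₗ (LinearMap.ker c).subtype) ∘ₗ (Fe.symm : LinearMap.ker e →ₗ[K] LinearMap.ker c))
    -- ψ : Dual D0 with ψ ∘ (ker e).subtype = φ ∘ subtype ∘ Fe.symm
    have hψ' : ∀ x (hx : x ∈ LinearMap.ker c), ψ (f0 x) = φ x := by
      intro x hx
      have h1 := LinearMap.congr_fun hψ (Fe ⟨x, hx⟩)
      simp only [LinearMap.comp_apply, Submodule.subtype_apply, LinearEquiv.coe_coe,
        LinearEquiv.symm_apply_apply] at h1
      have h2 : ((Fe ⟨x, hx⟩ : LinearMap.ker e) : D0) = f0 x := rfl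
      rw [h2] at h1
      exact h1
    -- φ - ψ ∘ f0 vanishes on ker c; factor it through c
    obtain ⟨w, hw⟩ := exists_factor c (φ - f0.dualMap ψ) (by
      intro x hx
      simp only [LinearMap.sub_apply, LinearMap.dualMap_apply]
      rw [hψ' x (by simpa using hx), sub_self])
    refine ⟨ψ, w, ?_⟩
    have : c.dualMap w = φ - f0.dualMap ψ := hw
    rw [this]
    abel
end Aux

/-- Pullback of BV data along a quasi-isomorphism. Let `(L, U, S, σ)` be
BV data for a quasi-smooth L∞-algebra in degrees `[1,2]`, and `Φ : (L̃, V) → (L, U)` a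
quasi-isomorphism. At a Maurer-Cartan element `υ` of `(L̃, V)`: the tangent complexes
are `[L̃¹_υ →^{d_υ} L̃²_υ]` (= `[A1 → A2]`) and `[L¹_{φυ} → L²_{φυ}]` (= `[B1 → B2]`),
with `(φ¹, φ²)` the tangent quasi-isomorphism; `σ : B2 → (B1)^∨` gives a
quasi-isomorphism `(σ^∨, σ) = (σ.flip, σ)` to the shifted dual complex. Then the
pullback `φ*σ = φ¹^∨ ∘ σ ∘ φ²` gives a quasi-isomorphism
`((φ*σ)^∨, φ*σ)` from `[A1 →^{d_υ} A2]` to `[(A2)^∨ →^{d_υ^∨} (A1)^∨]`; i.e.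
`(Φ*S, Φ*σ)` is again BV data. -/
theorem pullback_of_BV_data_is_BV_data {A1 A2 B1 B2 : Type*}
    [AddCommGroup A1] [Module ℂ A1] [AddCommGroup A2] [Module ℂ A2]
    [AddCommGroup B1] [Module ℂ B1] [AddCommGroup B2] [Module ℂ B2]
    -- twisted differentials at υ and φ(υ)
    (dA : A1 →ₗ[ℂ] A2) (dB : B1 →ₗ[ℂ] B2)
    -- the tangent map of the quasi-isomorphism Φ at υ
    (phi1 : A1 →ₗ[ℂ] B1) (phi2 : A2 →ₗ[ℂ] B2)
    (hphi : IsQuasiIsoSq dA dB phi1 phi2)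
    -- the BV bundle map σ at φ(υ), a quasi-isomorphism onto the shifted dual complex
    (σ : B2 →ₗ[ℂ] Module.Dual ℂ B1)
    (hσ : IsQuasiIsoSq dB (dB.dualMap) σ.flip σ) :
    IsQuasiIsoSq dA (dA.dualMap)
      ((phi1.dualMap ∘ₗ σ ∘ₗ phi2).flip)
      (phi1.dualMap ∘ₗ σ ∘ₗ phi2) := by
  have h := (hphi.comp hσ).comp hphi.dual
  have e0 : (phi2.dualMap ∘ₗ σ.flip ∘ₗ phi1) = (phi1.dualMap ∘ₗ σ ∘ₗ phi2).flip := by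
    ext x y
    simp [LinearMap.dualMap_apply, LinearMap.flip_apply]
  rw [← e0]
  exact h
end
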